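/- For every positive integer n, the number of pairs (x,y) ∈ ℤ² with x²+xy+y² = n equals 6·Σ_{d|n} χ−3(d), where χ−3 is the nontrivial character mod 3 (χ−3(d) = 1 if d ≡ 1 mod 3, −1 if d ≡ 2 mod 3, 0 if 3|d). -/

import Mathlib

/-- Eisenstein integers: `a + b ω` with `ω` a primitive cube root of unity. -/
@[ext]
structure Eis where
  re : ℤ
  im : ℤ
  deriving DecidableEq

namespace Eis

instance : Zero Eis := ⟨⟨0, 0⟩⟩
@[simp] theorem zero_re : (0 : Eis).re = 0 := rfl
@[simp] theorem zero_im : (0 : Eis).im = 0 := rfl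

instance : One Eis := ⟨⟨1, 0⟩⟩
@[simp] theorem one_re : (1 : Eis).re = 1 := rfl
@[simp] theorem one_im : (1 : Eis).im = 0 := rfl

instance : Add Eis := ⟨fun z w => ⟨z.1 + w.1, z.2 + w.2⟩⟩
@[simp] theorem add_re (z w : Eis) : (z + w).re = z.re + w.re := rfl
@[simp] theorem add_im (z w : Eis) : (z + w).im = z.im + w.im := rfl

instance : Neg Eis := ⟨fun z => ⟨-z.1, -z.2⟩⟩
@[simp] theorem neg_re (z : Eis) : (-z).re = -z.re := rfl
@[simp] theorem neg_im (z : Eis) : (-z).im = -z.im := rfl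

instance : Mul Eis :=
  ⟨fun z w => ⟨z.1 * w.1 - z.2 * w.2, z.1 * w.2 + z.2 * w.1 - z.2 * w.2⟩⟩
@[simp] theorem mul_re (z w : Eis) : (z * w).re = z.re * w.re - z.im * w.im := rfl
@[simp] theorem mul_im (z w : Eis) :
    (z * w).im = z.re * w.im + z.im * w.re - z.im * w.im := rfl

instance addCommGroup : AddCommGroup Eis := by
  refine
  { add := (· + ·)
    zero := (0 : Eis)
    sub := fun a b => a + -b
    neg := Neg.neg
    nsmul := @nsmulRec Eis ⟨0⟩ ⟨(· + ·)⟩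
    zsmul := @zsmulRec Eis ⟨0⟩ ⟨(· + ·)⟩ ⟨Neg.neg⟩ (@nsmulRec Eis ⟨0⟩ ⟨(· + ·)⟩)
    add_assoc := ?_
    zero_add := ?_
    add_zero := ?_
    neg_add_cancel := ?_
    add_comm := ?_ } <;>
  intros <;>
  ext <;>
  simp [add_comm, add_left_comm]

@[simp] theorem sub_re (z w : Eis) : (z - w).re = z.re - w.re := rfl
@[simp] theorem sub_im (z w : Eis) : (z - w).im = z.im - w.im := rfl

instance addGroupWithOne : AddGroupWithOne Eis :=
  { Eis.addCommGroup with
    natCast := fun n => ⟨n, 0⟩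
    intCast := fun n => ⟨n, 0⟩
    one := 1 }

instance commRing : CommRing Eis := by
  refine
  { Eis.addGroupWithOne with
    mul := (· * ·)
    npow := @npowRec Eis ⟨1⟩ ⟨(· * ·)⟩,
    add_comm := ?_
    left_distrib := ?_
    right_distrib := ?_
    zero_mul := ?_
    mul_zero := ?_
    mul_assoc := ?_
    one_mul := ?_
    mul_one := ?_
    mul_comm := ?_ } <;>
  intros <;>
  ext <;>
  simp <;>
  ring

@[simp] theorem natCast_re (n : ℕ) : (n : Eis).re = n := rfl
@[simp] theorem natCast_im (n : ℕ) : (n : Eis).im = 0 := rfl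
@[simp] theorem intCast_re (n : ℤ) : (n : Eis).re = n := rfl
@[simp] theorem intCast_im (n : ℤ) : (n : Eis).im = 0 := rfl

/-- conjugation -/
def conj (z : Eis) : Eis := ⟨z.re - z.im, -z.im⟩
@[simp] theorem conj_re (z : Eis) : (conj z).re = z.re - z.im := rfl
@[simp] theorem conj_im (z : Eis) : (conj z).im = -z.im := rfl

theorem conj_mul (z w : Eis) : conj (z * w) = conj z * conj w := by ext <;> simp <;> ring

/-- the norm -/
def norm (z : Eis) : ℤ := z.re ^ 2 - z.re * z.im + z.im ^ 2

theorem norm_def (z : Eis) : norm z = z.re ^ 2 - z.re * z.im + z.im ^ 2 := rfl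

theorem mul_conj (z : Eis) : z * conj z = ⟨norm z, 0⟩ := by ext <;> simp [norm] <;> ring

@[simp] theorem norm_mul (z w : Eis) : norm (z * w) = norm z * norm w := by
  simp only [norm]; simp; ring

@[simp] theorem norm_one : norm 1 = 1 := rfl

theorem norm_nonneg (z : Eis) : 0 ≤ norm z := by
  have : 4 * norm z = (2 * z.re - z.im) ^ 2 + 3 * z.im ^ 2 := by simp [norm]; ring
  nlinarith [sq_nonneg (2 * z.re - z.im), sq_nonneg z.im]

theorem norm_eq_zero_iff {z : Eis} : norm z = 0 ↔ z = 0 := by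
  constructor
  · intro h
    have h4 : (2 * z.re - z.im) ^ 2 + 3 * z.im ^ 2 = 0 := by simp [norm] at h; nlinarith
    have h1 : z.im = 0 := by nlinarith [sq_nonneg (2 * z.re - z.im), sq_nonneg z.im]
    have h2 : z.re = 0 := by nlinarith
    ext <;> simp [h1, h2]
  · rintro rfl; simp [norm]

theorem norm_pos_of_ne_zero {z : Eis} (h : z ≠ 0) : 0 < norm z :=
  lt_of_le_of_ne (norm_nonneg z) (fun h' => h (norm_eq_zero_iff.mp h'.symm))

instance : Nontrivial Eis := ⟨⟨0, 1, fun h => by simpa using congrArg Eis.re h⟩⟩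

instance : NoZeroDivisors Eis where
  eq_zero_or_eq_zero_of_mul_eq_zero {z w} h := by
    by_contra hc
    push_neg at hc
    have := norm_pos_of_ne_zero hc.1
    have := norm_pos_of_ne_zero hc.2
    have h0 : norm (z * w) = 0 := by rw [h]; simp [norm]
    rw [norm_mul] at h0
    nlinarith

instance : IsDomain Eis := NoZeroDivisors.to_isDomain _

end Eis

namespace EisAux

theorem round_div (s m : ℤ) (hm : 0 < m) :
    ∃ q : ℤ, 2 * (s - q * m) ≤ m ∧ -m ≤ 2 * (s - q * m) := by
  refine ⟨(2 * s + m) / (2 * m), ?_, ?_⟩ <;>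
  · have h2m : (0:ℤ) < 2 * m := by linarith
    have h1 := Int.emod_nonneg (2*s+m) (ne_of_gt h2m)
    have h2 := Int.emod_lt_of_pos (2*s+m) h2m
    have h3 := Int.mul_ediv_add_emod (2*s+m) (2*m)
    nlinarith [h1, h2, h3]

end EisAux

namespace Eis2
open Eis


theorem exists_div (a b : Eis) (hb : b ≠ 0) :
    ∃ q r : Eis, a = q * b + r ∧ Eis.norm r < Eis.norm b := by
  set m := Eis.norm b with hm
  have hm0 : 0 < m := Eis.norm_pos_of_ne_zero hb
  set c := Eis.conj b with hc
  obtain ⟨q1, hq1a, hq1b⟩ := EisAux.round_div (a * c).re m hm0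
  obtain ⟨q2, hq2a, hq2b⟩ := EisAux.round_div (a * c).im m hm0
  refine ⟨⟨q1, q2⟩, a - ⟨q1, q2⟩ * b, by ring, ?_⟩
  set r : Eis := a - ⟨q1, q2⟩ * b with hr
  have hbc : b * c = ⟨m, 0⟩ := Eis.mul_conj b
  have hrc : r * c = ⟨(a*c).re - q1 * m, (a*c).im - q2 * m⟩ := by
    have : r * c = a * c - (⟨q1, q2⟩ : Eis) * ⟨m, 0⟩ := by
      rw [hr]; rw [sub_mul, mul_assoc, hbc]
    rw [this]; ext <;> simp <;> ring
  set x := (a*c).re - q1 * m with hx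
  set y := (a*c).im - q2 * m with hy
  have hnrc : Eis.norm r * m = x ^ 2 - x * y + y ^ 2 := by
    have := Eis.norm_mul r c
    have hnc : Eis.norm c = m := by simp [Eis.norm, hc, hm] at *; ring
    rw [hnc] at this
    rw [← this, hrc]; rfl
  have h16 : 16 * (Eis.norm r * m) ≤ 12 * m ^ 2 := by nlinarith [sq_nonneg (2*x - y), sq_nonneg (2*y - x), sq_nonneg (x+y), sq_nonneg (x - y)]
  nlinarith [h16, hm0, Eis.norm_nonneg r]

instance : IsPrincipalIdealRing Eis := by
  constructor
  intro I
  by_cases hI : I = ⊥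
  · exact hI ▸ ⟨⟨0, (Ideal.span_zero).symm⟩⟩
  · classical
    obtain ⟨b0, hb0I, hb00⟩ := Submodule.exists_mem_ne_zero_of_ne_bot hI
    have hex : ∃ k : ℕ, ∃ b ∈ I, b ≠ 0 ∧ (Eis.norm b).natAbs = k :=
      ⟨(Eis.norm b0).natAbs, b0, hb0I, hb00, rfl⟩
    obtain ⟨b, hbI, hb0, hbk⟩ := Nat.find_spec hex
    refine ⟨⟨b, ?_⟩⟩
    apply le_antisymm
    · intro a haI
      obtain ⟨q, r, hqr, hnr⟩ := exists_div a b hb0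
      have hrI : r ∈ I := by
        have : r = a - q * b := by rw [hqr]; ring
        rw [this]
        exact Submodule.sub_mem I haI (I.smul_mem q hbI)
      by_cases hr0 : r = 0
      · rw [Ideal.submodule_span_eq, Ideal.mem_span_singleton]
        exact ⟨q, by rw [hqr, hr0, add_zero, mul_comm]⟩
      · exfalso
        have hlt : (Eis.norm r).natAbs < Nat.find hex := by
          rw [← hbk]
          have h1 := Eis.norm_nonneg r
          have h2 := Eis.norm_nonneg b
          omega
        exact Nat.find_min hex hlt ⟨r, hrI, hr0, rfl⟩
    · rw [Ideal.submodule_span_eq, Ideal.span_le]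
      simpa using hbI

end Eis2

namespace Eis

theorem isUnit_iff_norm_one {z : Eis} : IsUnit z ↔ norm z = 1 := by
  constructor
  · rintro ⟨u, rfl⟩
    have h := norm_mul u.val u.inv
    rw [u.val_inv, norm_one] at h
    have h2 := norm_nonneg (u.inv)
    exact Int.eq_one_of_mul_eq_one_right (norm_nonneg _) h.symm
  · intro h
    refine ⟨⟨z, conj z, ?_, ?_⟩, rfl⟩
    · rw [mul_conj, h]; rfl
    · rw [mul_comm, mul_conj, h]; rfl

theorem norm_unit (u : Eisˣ) : norm u.val = 1 := isUnit_iff_norm_one.mp u.isUnit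

theorem norm_eq_one_enum {z : Eis} (h : norm z = 1) :
    z = ⟨1, 0⟩ ∨ z = ⟨-1, 0⟩ ∨ z = ⟨0, 1⟩ ∨ z = ⟨0, -1⟩ ∨ z = ⟨1, 1⟩ ∨ z = ⟨-1, -1⟩ := by
  obtain ⟨a, b⟩ := z
  simp only [norm] at h
  simp only [Eis.mk.injEq]
  have h4 : (2 * a - b) ^ 2 + 3 * b ^ 2 = 4 := by nlinarith
  have hb2 : b ^ 2 ≤ 1 := by nlinarith [sq_nonneg (2*a - b)]
  have hbl : -1 ≤ b := by nlinarith [sq_nonneg (b + 1)]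
  have hbu : b ≤ 1 := by nlinarith [sq_nonneg (b - 1)]
  have hb : b = -1 ∨ b = 0 ∨ b = 1 := by omega
  rcases hb with rfl | rfl | rfl
  · have : a * (a + 1) = 0 := by nlinarith
    rcases mul_eq_zero.mp this with rfl | h'
    · tauto
    · have : a = -1 := by omega
      tauto
  · have : (a - 1) * (a + 1) = 0 := by nlinarith
    rcases mul_eq_zero.mp this with h' | h'
    · have : a = 1 := by omega
      tauto
    · have : a = -1 := by omega
      tauto
  · have : a * (a - 1) = 0 := by nlinarith
    rcases mul_eq_zero.mp this with rfl | h'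
    · tauto
    · have : a = 1 := by omega
      tauto

/-- the six units -/
def unitList : Fin 6 → Eis
  | 0 => ⟨1, 0⟩
  | 1 => ⟨-1, 0⟩
  | 2 => ⟨0, 1⟩
  | 3 => ⟨0, -1⟩
  | 4 => ⟨1, 1⟩
  | 5 => ⟨-1, -1⟩

theorem norm_unitList (i : Fin 6) : norm (unitList i) = 1 := by
  fin_cases i <;> decide

noncomputable def unitsEquivFin : Eisˣ ≃ Fin 6 := by
  have e1 : Eisˣ ≃ {z : Eis // norm z = 1} :=
    { toFun := fun u => ⟨u.val, norm_unit u⟩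
      invFun := fun z => (isUnit_iff_norm_one.mpr z.2).unit
      left_inv := fun u => Units.ext (by simp)
      right_inv := fun z => Subtype.ext (by simp) }
  have e2 : Fin 6 ≃ {z : Eis // norm z = 1} := by
    refine Equiv.ofBijective (fun i => ⟨unitList i, norm_unitList i⟩) ⟨?_, ?_⟩
    · intro i j h
      simp only [Subtype.mk.injEq] at h
      fin_cases i <;> fin_cases j <;> first | rfl | (exfalso; revert h; decide)
    · rintro ⟨z, hz⟩
      rcases norm_eq_one_enum hz with h | h | h | h | h | h
      · exact ⟨0, by simp [unitList, h]⟩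
      · exact ⟨1, by simp [unitList, h]⟩
      · exact ⟨2, by simp [unitList, h]⟩
      · exact ⟨3, by simp [unitList, h]⟩
      · exact ⟨4, by simp [unitList, h]⟩
      · exact ⟨5, by simp [unitList, h]⟩
  exact e1.trans e2.symm

theorem card_units : Nat.card Eisˣ = 6 := Nat.card_eq_of_equiv_fin unitsEquivFin

theorem norm_of_associated {a b : Eis} (h : Associated a b) : norm a = norm b := by
  obtain ⟨u, rfl⟩ := h
  rw [norm_mul, norm_unit, mul_one]

/-- norm on associate classes -/
noncomputable def normA (c : Associates Eis) : ℤ := norm (Quot.out c)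

theorem normA_mk (z : Eis) : normA (Associates.mk z) = norm z := by
  apply norm_of_associated
  rw [← Associates.mk_eq_mk_iff_associated, Associates.quot_out]

theorem normA_mul (c d : Associates Eis) : normA (c * d) = normA c * normA d := by
  obtain ⟨x, rfl⟩ := Associates.mk_surjective c
  obtain ⟨y, rfl⟩ := Associates.mk_surjective d
  rw [Associates.mk_mul_mk, normA_mk, normA_mk, normA_mk, norm_mul]

noncomputable def orbitEquiv (n : ℤ) (hn : n ≠ 0) :
    ({c : Associates Eis // normA c = n} × Eisˣ) ≃ {z : Eis // norm z = n} := by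
  refine Equiv.ofBijective
    (fun p => ⟨(Quot.out p.1.val) * p.2.val, by
      rw [norm_mul, norm_unit, mul_one]; exact p.1.2⟩) ⟨?_, ?_⟩
  · rintro ⟨⟨c, hc⟩, u⟩ ⟨⟨c', hc'⟩, u'⟩ h
    simp only [Subtype.mk.injEq] at h
    have hcc : c = c' := by
      have := congrArg Associates.mk h
      rw [← Associates.mk_mul_mk, ← Associates.mk_mul_mk] at this
      rw [(Associates.mk_eq_one).mpr u.isUnit, (Associates.mk_eq_one).mpr u'.isUnit,
        mul_one, mul_one, Associates.quot_out, Associates.quot_out] at this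
      exact this
    subst hcc
    have hne : (Quot.out c : Eis) ≠ 0 := by
      intro h0
      rw [normA, h0] at hc
      rw [norm_eq_zero_iff.mpr rfl] at hc
      exact hn hc.symm
    have := mul_left_cancel₀ hne h
    exact Prod.ext (Subtype.ext rfl) (Units.ext this)
  · rintro ⟨z, hz⟩
    have : Associated (Quot.out (Associates.mk z)) z := by
      rw [← Associates.mk_eq_mk_iff_associated, Associates.quot_out]
    obtain ⟨u, hu⟩ := this
    exact ⟨⟨⟨Associates.mk z, by rw [normA_mk, hz]⟩, u⟩, Subtype.ext hu⟩

theorem card_norm_eq (n : ℤ) (hn : n ≠ 0) :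
    Nat.card {z : Eis // norm z = n} =
      6 * Nat.card {c : Associates Eis // normA c = n} := by
  rw [← Nat.card_congr (orbitEquiv n hn), Nat.card_prod, card_units, mul_comm]

end Eis



namespace Eis

theorem norm_conj (z : Eis) : norm (conj z) = norm z := by simp [norm]; ring

theorem intCast_mul_conj (z : Eis) : ((norm z : ℤ) : Eis) = z * conj z := by
  ext <;> simp only [intCast_re, intCast_im, mul_re, mul_im, conj_re, conj_im, norm] <;> ring

theorem dvd_intCast_norm (z : Eis) : z ∣ ((norm z : ℤ) : Eis) :=
  ⟨conj z, intCast_mul_conj z⟩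

theorem intCast_dvd_iff (n : ℤ) (z : Eis) : (n : Eis) ∣ z ↔ n ∣ z.re ∧ n ∣ z.im := by
  constructor
  · rintro ⟨w, rfl⟩
    constructor
    · exact ⟨w.re, by simp⟩
    · exact ⟨w.im, by simp⟩
  · rintro ⟨⟨u, hu⟩, ⟨v, hv⟩⟩
    exact ⟨⟨u, v⟩, by ext <;> simp [hu, hv]⟩

theorem norm_dvd_norm {z w : Eis} (h : z ∣ w) : norm z ∣ norm w := by
  obtain ⟨v, rfl⟩ := h
  exact ⟨norm v, norm_mul z v⟩

theorem norm_pow (z : Eis) (k : ℕ) : norm (z ^ k) = norm z ^ k := by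
  induction k with
  | zero => simp
  | succ k ih => rw [pow_succ, pow_succ, norm_mul, ih]

theorem norm_intCast (n : ℤ) : norm (n : Eis) = n ^ 2 := by simp [norm]

theorem not_isUnit_of_norm {z : Eis} (h : norm z ≠ 1) : ¬IsUnit z :=
  fun hu => h (isUnit_iff_norm_one.mp hu)

theorem ne_zero_of_norm {z : Eis} (h : norm z ≠ 0) : z ≠ 0 :=
  fun h0 => h (by rw [norm_eq_zero_iff.mpr h0])

theorem irreducible_of_norm_prime {z : Eis} (h : Prime (norm z)) : Irreducible z := by
  constructor
  · exact not_isUnit_of_norm (fun h1 => h.not_unit (h1 ▸ isUnit_one))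
  · intro a b hab
    rcases (h.irreducible.isUnit_or_isUnit (by rw [hab, norm_mul])) with h1 | h1
    · left
      apply isUnit_iff_norm_one.mpr
      rcases Int.isUnit_iff.mp h1 with h2 | h2
      · exact h2
      · exfalso; have := norm_nonneg a; omega
    · right
      apply isUnit_iff_norm_one.mpr
      rcases Int.isUnit_iff.mp h1 with h2 | h2
      · exact h2
      · exfalso; have := norm_nonneg b; omega

theorem prime_of_norm_prime {z : Eis} (h : Prime (norm z)) : Prime z :=
  UniqueFactorizationMonoid.irreducible_iff_prime.mp (irreducible_of_norm_prime h)

theorem exists_prime_dvd {z : Eis} (h0 : z ≠ 0) (hu : ¬IsUnit z) :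
    ∃ π : Eis, Prime π ∧ π ∣ z := by
  obtain ⟨π, h1, h2⟩ := WfDvdMonoid.exists_irreducible_factor hu h0
  exact ⟨π, UniqueFactorizationMonoid.irreducible_iff_prime.mp h1, h2⟩

theorem associated_of_dvd_irred {π δ : Eis} (hπ : ¬IsUnit π) (hδ : Irreducible δ)
    (h : π ∣ δ) : Associated π δ := by
  obtain ⟨c, hc⟩ := h
  rcases hδ.isUnit_or_isUnit hc with h1 | h1
  · exact absurd h1 hπ
  · exact ⟨h1.unit, by rw [IsUnit.unit_spec, ← hc]⟩

theorem prime_norm_pow {π : Eis} (hπ : Prime π) {q : ℕ} (hq : q.Prime) {k : ℕ}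
    (hdvd : norm π ∣ (q : ℤ) ^ k) : ∃ j, 1 ≤ j ∧ j ≤ k ∧ norm π = (q : ℤ) ^ j := by
  have hnn := norm_nonneg π
  have h1 : (norm π).natAbs ∣ q ^ k := by
    have := Int.natAbs_dvd_natAbs.mpr hdvd
    rwa [Int.natAbs_pow, Int.natAbs_natCast] at this
  obtain ⟨j, hj, hj2⟩ := (Nat.dvd_prime_pow hq).mp h1
  refine ⟨j, ?_, hj, ?_⟩
  · rcases Nat.eq_zero_or_pos j with rfl | h
    · exfalso
      apply hπ.not_unit
      apply isUnit_iff_norm_one.mpr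
      simp at hj2
      omega
    · exact h
  · have : norm π = ((norm π).natAbs : ℤ) := (Int.natAbs_of_nonneg hnn).symm
    rw [this, hj2]
    push_cast
    ring

/-- `λ = 1 + 2ω`, a prime of norm 3 -/
def lam : Eis := ⟨1, 2⟩

@[simp] theorem lam_re : lam.re = 1 := rfl
@[simp] theorem lam_im : lam.im = 2 := rfl

theorem norm_lam : norm lam = 3 := rfl

theorem prime_lam : Prime lam :=
  prime_of_norm_prime (by rw [norm_lam]; norm_num)

theorem three_eq_neg_lam_sq : (3 : Eis) = -(lam * lam) := by ext <;> decide

theorem assoc_lam_pow : ∀ k : ℕ, ∀ z : Eis, norm z = 3 ^ k → Associated z (lam ^ k) := by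
  intro k
  induction k with
  | zero =>
    intro z h
    rw [pow_zero]
    exact associated_one_iff_isUnit.mpr (isUnit_iff_norm_one.mpr (by simpa using h))
  | succ k ih =>
    intro z h
    have h0 : z ≠ 0 := ne_zero_of_norm (by rw [h]; positivity)
    have hu : ¬IsUnit z := not_isUnit_of_norm (by
      rw [h, pow_succ]; nlinarith [pow_pos (by norm_num : (0:ℤ) < 3) k])
    obtain ⟨π, hπ, hπz⟩ := exists_prime_dvd h0 hu
    have hnd : norm π ∣ (3:ℤ) ^ (k+1) := by
      have := norm_dvd_norm hπz
      rwa [h] at this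
    obtain ⟨j, hj1, hj2, hj3⟩ := prime_norm_pow hπ (by norm_num) hnd
    have hπlam : Associated π lam := by
      have hd1 : π ∣ ((3:ℤ)^j : ℤ) • (1:Eis) := by
        have := dvd_intCast_norm π
        rw [hj3] at this
        simpa using this
      have hd2 : π ∣ (3 : Eis) ^ j := by
        have : ((((3:ℤ)^j : ℤ)) : Eis) = (3 : Eis) ^ j := by push_cast; ring
        rw [← this]
        simpa using hd1
      have hd3 : π ∣ (-(lam * lam)) ^ j := by rwa [← three_eq_neg_lam_sq]
      have hd4 : π ∣ -(lam * lam) := hπ.dvd_of_dvd_pow hd3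
      have hd5 : π ∣ lam * lam := (dvd_neg).mp hd4
      have hd6 : π ∣ lam := (hπ.dvd_or_dvd hd5).elim id id
      exact associated_of_dvd_irred hπ.not_unit prime_lam.irreducible hd6
    obtain ⟨c, rfl⟩ := hπz
    have hnc : norm c = 3 ^ k := by
      have h3 : norm π = 3 := norm_of_associated hπlam
      rw [norm_mul, h3] at h
      have : (3:ℤ) * norm c = 3 * 3 ^ k := by rw [h]; ring
      linarith [mul_left_cancel₀ (by norm_num : (3:ℤ) ≠ 0) this]
    have := (hπlam.mul_mul (ih c hnc))
    rwa [← pow_succ'] at this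

theorem card_pow_three (k : ℕ) :
    Nat.card {c : Associates Eis // normA c = (3:ℤ) ^ k} = 1 := by
  rw [Nat.card_eq_one_iff_unique]
  constructor
  · constructor
    rintro ⟨c, hc⟩ ⟨c', hc'⟩
    have h1 : Associated (Quot.out c) (lam ^ k) := assoc_lam_pow k _ hc
    have h2 : Associated (Quot.out c') (lam ^ k) := assoc_lam_pow k _ hc'
    have : c = c' := by
      rw [← Associates.quot_out c, ← Associates.quot_out c',
        Associates.mk_eq_mk_iff_associated]
      exact h1.trans h2.symm
    exact Subtype.ext this
  · refine ⟨⟨Associates.mk (lam ^ k), ?_⟩⟩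
    rw [normA_mk, norm_pow, norm_lam]

end Eis


namespace Eis

theorem int_prime_of_nat (p : ℕ) (hp : p.Prime) : Prime ((p : ℕ) : ℤ) := by
  rw [Int.prime_iff_natAbs_prime]
  simpa using hp

section CaseTwo

theorem no_norm_eq_two_mod_three {p : ℕ} (h2 : p % 3 = 2) (z : Eis) : norm z ≠ (p : ℤ) := by
  intro h
  have hc := congrArg (fun t : ℤ => (t : ZMod 3)) h
  simp only [norm] at hc
  push_cast at hc
  have hp3 : ((p : ℕ) : ZMod 3) = 2 := by
    rw [← ZMod.natCast_mod, h2]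
    rfl
  rw [hp3] at hc
  exact (by decide : ∀ x y : ZMod 3, x ^ 2 - x * y + y ^ 2 ≠ 2) _ _ hc

theorem prime_cast_two_mod_three {p : ℕ} (hp : p.Prime) (h2 : p % 3 = 2) : Prime ((p : ℕ) : Eis) := by
  apply UniqueFactorizationMonoid.irreducible_iff_prime.mp
  have hnormp : norm ((p:ℕ) : Eis) = (p:ℤ)^2 := by
    have : ((p:ℕ) : Eis) = ((p : ℤ) : Eis) := by push_cast; rfl
    rw [this, norm_intCast]
  constructor
  · apply not_isUnit_of_norm
    rw [hnormp]
    have : (2:ℤ) ≤ p := by exact_mod_cast hp.two_le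
    nlinarith
  · intro a b hab
    have hn : norm a * norm b = (p:ℤ)^2 := by rw [← norm_mul, ← hab, hnormp]
    have hna : (norm a).natAbs ∣ p ^ 2 := by
      have : norm a ∣ (p:ℤ)^2 := Dvd.intro _ hn
      have := Int.natAbs_dvd_natAbs.mpr this
      rwa [Int.natAbs_pow, Int.natAbs_natCast] at this
    obtain ⟨j, hj, hj2⟩ := (Nat.dvd_prime_pow hp).mp hna
    have hcast : norm a = ((norm a).natAbs : ℤ) := (Int.natAbs_of_nonneg (norm_nonneg a)).symm
    interval_cases j
    · left
      apply isUnit_iff_norm_one.mpr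
      rw [hcast, hj2]; simp
    · exfalso
      apply no_norm_eq_two_mod_three h2 a
      rw [hcast, hj2]
      push_cast
      ring
    · right
      apply isUnit_iff_norm_one.mpr
      have hb : norm a * norm b = norm a * 1 → norm b = 1 := by
        intro hh
        have hn0 : norm a ≠ 0 := by
          rw [hcast, hj2]
          exact_mod_cast pow_ne_zero 2 hp.pos.ne'
        exact mul_left_cancel₀ hn0 hh
      apply hb
      rw [hn, hcast, hj2]
      push_cast
      ring

theorem case_two_class {p : ℕ} (hp : p.Prime) (h2 : p % 3 = 2) : ∀ k : ℕ, ∀ z : Eis, norm z = (p:ℤ) ^ k →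
    ∃ t, k = 2 * t ∧ Associated z (((p:ℕ) : Eis) ^ t) := by
  have hp2 : (2:ℤ) ≤ p := by exact_mod_cast hp.two_le
  intro k
  induction k using Nat.strong_induction_on with
  | _ k ih =>
    intro z h
    rcases Nat.eq_zero_or_pos k with rfl | hk
    · refine ⟨0, rfl, ?_⟩
      rw [pow_zero]
      exact associated_one_iff_isUnit.mpr (isUnit_iff_norm_one.mpr (by simpa using h))
    · have hppos : (0:ℤ) < (p:ℤ)^k := by positivity
      have h0 : z ≠ 0 := ne_zero_of_norm (by rw [h]; positivity)
      have hu : ¬IsUnit z := not_isUnit_of_norm (by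
        rw [h]
        have : (p:ℤ)^1 ≤ (p:ℤ)^k := pow_le_pow_right₀ (by linarith) hk
        simp at this
        nlinarith)
      obtain ⟨π, hπ, hπz⟩ := exists_prime_dvd h0 hu
      have hnd : norm π ∣ (p:ℤ) ^ k := by
        have := norm_dvd_norm hπz
        rwa [h] at this
      obtain ⟨j, hj1, hj2, hj3⟩ := prime_norm_pow hπ hp hnd
      have hπp : Associated π ((p:ℕ) : Eis) := by
        have hd2 : π ∣ ((p:ℕ) : Eis) ^ j := by
          have hc : (((p:ℤ)^j : ℤ) : Eis) = ((p:ℕ) : Eis) ^ j := by push_cast; ring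
          have := dvd_intCast_norm π
          rw [hj3, hc] at this
          exact this
        have hd3 : π ∣ ((p:ℕ) : Eis) := hπ.dvd_of_dvd_pow hd2
        exact associated_of_dvd_irred hπ.not_unit (prime_cast_two_mod_three hp h2).irreducible hd3
      have hnπ : norm π = (p:ℤ)^2 := by
        have := norm_of_associated hπp
        rw [this]
        have : ((p:ℕ) : Eis) = ((p : ℤ) : Eis) := by push_cast; rfl
        rw [this, norm_intCast]
      obtain ⟨c, rfl⟩ := hπz
      have hk2 : 2 ≤ k := by
        by_contra hlt
        have hk1 : k = 1 := by omega
        subst hk1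
        rw [norm_mul, hnπ] at h
        have hc0 : c ≠ 0 := by
          intro hc0; rw [hc0, mul_zero] at h0; exact h0 rfl
        have := norm_pos_of_ne_zero hc0
        simp at h
        nlinarith
      have hnc : norm c = (p:ℤ)^(k-2) := by
        rw [norm_mul, hnπ] at h
        have hpk : (p:ℤ)^k = (p:ℤ)^2 * (p:ℤ)^(k-2) := by
          rw [← pow_add]
          congr 1
          omega
        rw [hpk] at h
        exact mul_left_cancel₀ (by positivity) h
      obtain ⟨t, ht, hassoc⟩ := ih (k-2) (by omega) c hnc
      refine ⟨t + 1, by omega, ?_⟩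
      have := hπp.mul_mul hassoc
      rwa [← pow_succ'] at this

theorem card_pow_two_mod_three_even {p : ℕ} (hp : p.Prime) (h2 : p % 3 = 2) (k t : ℕ) (ht : k = 2 * t) :
    Nat.card {c : Associates Eis // normA c = (p:ℤ) ^ k} = 1 := by
  rw [Nat.card_eq_one_iff_unique]
  constructor
  · constructor
    rintro ⟨c, hc⟩ ⟨c', hc'⟩
    obtain ⟨t1, ht1, h1⟩ := case_two_class hp h2 k _ hc
    obtain ⟨t2, ht2, h2'⟩ := case_two_class hp h2 k _ hc'
    have htt : t1 = t2 := by omega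
    subst htt
    have : c = c' := by
      rw [← Associates.quot_out c, ← Associates.quot_out c',
        Associates.mk_eq_mk_iff_associated]
      exact h1.trans h2'.symm
    exact Subtype.ext this
  · refine ⟨⟨Associates.mk (((p:ℕ) : Eis) ^ t), ?_⟩⟩
    rw [normA_mk, norm_pow]
    have : ((p:ℕ) : Eis) = ((p : ℤ) : Eis) := by push_cast; rfl
    rw [this, norm_intCast, ← pow_mul, ht]

theorem card_pow_two_mod_three_odd {p : ℕ} (hp : p.Prime) (h2 : p % 3 = 2) (k : ℕ) (hk : ¬ ∃ t, k = 2 * t) :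
    Nat.card {c : Associates Eis // normA c = (p:ℤ) ^ k} = 0 := by
  have : IsEmpty {c : Associates Eis // normA c = (p:ℤ) ^ k} := by
    constructor
    rintro ⟨c, hc⟩
    obtain ⟨t, ht, _⟩ := case_two_class hp h2 k _ hc
    exact hk ⟨t, ht⟩
  simp

end CaseTwo

end Eis


namespace Eis

section CaseOne

theorem exists_sqrt_neg_three {p : ℕ} (hp : p.Prime) (h1 : p % 3 = 1) :
    ∃ a : ℤ, (p : ℤ) ∣ a ^ 2 + 3 := by
  haveI : Fact p.Prime := ⟨hp⟩
  haveI : Fact (Nat.Prime 3) := ⟨by norm_num⟩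
  have hcard : Fintype.card (ZMod p)ˣ = p - 1 := ZMod.card_units p
  have h3 : 3 ∣ Fintype.card (ZMod p)ˣ := by
    rw [hcard]
    have := hp.two_le
    omega
  obtain ⟨x, hx⟩ := exists_prime_orderOf_dvd_card 3 h3
  set y : ZMod p := ((x : (ZMod p)ˣ) : ZMod p) with hy
  have hy3 : y ^ 3 = 1 := by
    have : x ^ 3 = 1 := by rw [← hx]; exact pow_orderOf_eq_one x
    rw [hy, ← Units.val_pow_eq_pow_val, this, Units.val_one]
  have hyne : y ≠ 1 := by
    intro hh
    have : x = 1 := Units.ext (by rw [Units.val_one, ← hy]; exact hh)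
    rw [this] at hx
    simp at hx
  have hsum : y ^ 2 + y + 1 = 0 := by
    have hfact : (y - 1) * (y ^ 2 + y + 1) = 0 := by
      have : y ^ 3 - 1 = 0 := by rw [hy3]; ring
      calc (y - 1) * (y ^ 2 + y + 1) = y ^ 3 - 1 := by ring
      _ = 0 := this
    rcases mul_eq_zero.mp hfact with hh | hh
    · exact absurd (by linear_combination hh) hyne
    · exact hh
  have hsq : (2 * y + 1) ^ 2 = -3 := by linear_combination 4 * hsum
  refine ⟨((2 * y + 1).val : ℤ), ?_⟩
  rw [← ZMod.intCast_zmod_eq_zero_iff_dvd]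
  push_cast
  rw [ZMod.natCast_rightInverse (2 * y + 1)]
  rw [hsq]
  ring

theorem exists_pi {p : ℕ} (hp : p.Prime) (h1 : p % 3 = 1) :
    ∃ π : Eis, norm π = (p : ℤ) ∧ ((p:ℕ) : Eis) = π * conj π := by
  obtain ⟨a, ha⟩ := exists_sqrt_neg_three hp h1
  have hpodd : p ≠ 2 := by omega
  have hp2 : 2 ≤ p := hp.two_le
  -- p is not prime in Eis
  have hfact : ((a : Eis) - lam) * ((a : Eis) + lam) = ((a ^ 2 + 3 : ℤ) : Eis) := by
    ext <;>
      simp only [mul_re, mul_im, sub_re, sub_im, add_re, add_im, intCast_re, intCast_im,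
        lam_re, lam_im] <;> ring
  have hdvd : ((p:ℕ) : Eis) ∣ ((a : Eis) - lam) * ((a : Eis) + lam) := by
    rw [hfact]
    have : ((p:ℕ) : Eis) = ((p : ℤ) : Eis) := by push_cast; rfl
    rw [this]
    exact_mod_cast map_dvd (Int.castRingHom Eis) ha
  have hnotprime : ¬ Prime ((p:ℕ) : Eis) := by
    intro hpr
    have hcast : ((p:ℕ) : Eis) = (((p:ℕ) : ℤ) : Eis) := by push_cast; rfl
    rcases hpr.dvd_or_dvd hdvd with hd | hd
    all_goals {
      rw [hcast] at hd
      obtain ⟨-, hdim⟩ := (intCast_dvd_iff _ _).mp hd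
      simp only [sub_im, add_im, intCast_im, lam_im, zero_sub, zero_add] at hdim
      have h2d : ((p:ℕ):ℤ) ∣ 2 := by
        first
          | exact hdim
          | exact (dvd_neg).mp hdim
      have := Int.le_of_dvd (by norm_num) h2d
      omega }
  have hnormp : norm ((p:ℕ) : Eis) = (p:ℤ)^2 := by
    have : ((p:ℕ) : Eis) = ((p : ℤ) : Eis) := by push_cast; rfl
    rw [this, norm_intCast]
  have hnotunit : ¬ IsUnit ((p:ℕ) : Eis) := by
    apply not_isUnit_of_norm
    rw [hnormp]
    have : (2:ℤ) ≤ p := by exact_mod_cast hp2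
    nlinarith
  have hnotirr : ¬ Irreducible ((p:ℕ) : Eis) := fun h =>
    hnotprime (UniqueFactorizationMonoid.irreducible_iff_prime.mp h)
  rw [irreducible_iff] at hnotirr
  push_neg at hnotirr
  obtain ⟨z, w, hzw, hnz, hnw⟩ := hnotirr hnotunit
  have hn : norm z * norm w = (p:ℤ)^2 := by rw [← norm_mul, ← hzw, hnormp]
  have hna : (norm z).natAbs ∣ p ^ 2 := by
    have : norm z ∣ (p:ℤ)^2 := Dvd.intro _ hn
    have := Int.natAbs_dvd_natAbs.mpr this
    rwa [Int.natAbs_pow, Int.natAbs_natCast] at this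
  obtain ⟨j, hj, hj2⟩ := (Nat.dvd_prime_pow hp).mp hna
  have hcast : norm z = ((norm z).natAbs : ℤ) := (Int.natAbs_of_nonneg (norm_nonneg z)).symm
  have hnormz : norm z = (p : ℤ) := by
    interval_cases j
    · exfalso
      exact hnz (isUnit_iff_norm_one.mpr (by rw [hcast, hj2]; simp))
    · rw [hcast, hj2]; push_cast; ring
    · exfalso
      apply hnw
      apply isUnit_iff_norm_one.mpr
      have hn0 : norm z ≠ 0 := by
        rw [hcast, hj2]
        exact_mod_cast pow_ne_zero 2 hp.pos.ne'
      apply mul_left_cancel₀ hn0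
      rw [hn, hcast, hj2]
      push_cast
      ring
  refine ⟨z, hnormz, ?_⟩
  have := intCast_mul_conj z
  rw [hnormz] at this
  rw [← this]
  push_cast
  rfl

theorem pi_not_assoc_conj {p : ℕ} (hp : p.Prime) (h1 : p % 3 = 1) {π : Eis}
    (hπn : norm π = (p : ℤ)) : ¬ Associated π (conj π) := by
  intro hassoc
  have hipr : Prime (norm π) := by rw [hπn]; exact int_prime_of_nat p hp
  have hπ : Prime π := prime_of_norm_prime hipr
  have hd : π ∣ conj π := hassoc.dvd
  have hsub : π - conj π = ((π.im : ℤ) : Eis) * lam := by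
    ext <;>
      simp only [mul_re, mul_im, sub_re, sub_im, conj_re, conj_im, intCast_re, intCast_im,
        lam_re, lam_im] <;> ring
  have hd2 : π ∣ ((π.im : ℤ) : Eis) * lam := by
    rw [← hsub]
    exact dvd_sub (dvd_refl π) hd
  rcases hπ.dvd_or_dvd hd2 with hd3 | hd3
  · -- π ∣ im, so p ∣ im, then p ∣ re, contradiction
    have h5 : norm π ∣ norm ((π.im : ℤ) : Eis) := norm_dvd_norm hd3
    rw [hπn, norm_intCast] at h5
    have hpim : (p:ℤ) ∣ π.im := Int.Prime.dvd_pow' hp h5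
    have hpre : (p:ℤ) ∣ π.re := by
      have h6 : (p:ℤ) ∣ π.re ^ 2 := by
        have heq : π.re ^ 2 = norm π + π.re * π.im - π.im ^ 2 := by rw [norm_def]; ring
        rw [heq, hπn]
        exact dvd_sub (dvd_add dvd_rfl (hpim.mul_left π.re)) (by rw [sq]; exact hpim.mul_left π.im)
      exact Int.Prime.dvd_pow' hp h6
    obtain ⟨r, hr⟩ := hpre
    obtain ⟨s, hs⟩ := hpim
    have heq2 : norm π = (p:ℤ)^2 * (r^2 - r*s + s^2) := by rw [norm_def, hr, hs]; ring
    rw [hπn] at heq2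
    have h0 : (0:ℤ) ≤ r^2 - r*s + s^2 := by
      have := norm_nonneg ⟨r, s⟩
      simpa [norm_def] using this
    have hple : (2:ℤ) ≤ p := by exact_mod_cast hp.two_le
    have ht1 : (1:ℤ) ≤ r^2 - r*s + s^2 := by
      rcases h0.eq_or_lt with heq | hlt
      · exfalso; rw [← heq, mul_zero] at heq2; omega
      · omega
    have hsq : (p:ℤ)^2 * 1 ≤ (p:ℤ)^2 * (r^2 - r*s + s^2) :=
      mul_le_mul_of_nonneg_left ht1 (sq_nonneg _)
    nlinarith [hsq, heq2, hple]
  · -- π ∣ lam : p ∣ 3, contradiction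
    have h5 : norm π ∣ norm lam := norm_dvd_norm hd3
    rw [hπn, norm_lam] at h5
    have hb1 := Int.le_of_dvd (by norm_num) h5
    have hb2 := hp.two_le
    omega

end CaseOne

end Eis


namespace Eis

section CaseOneCount

variable {p : ℕ} {π : Eis}

theorem case_one_class (hp : p.Prime) (hπn : norm π = (p:ℤ))
    (hpp : ((p:ℕ) : Eis) = π * conj π) :
    ∀ k : ℕ, ∀ z : Eis, norm z = (p:ℤ) ^ k →
      ∃ i, i ≤ k ∧ Associated z (π ^ i * (conj π) ^ (k - i)) := by
  have hπpr : Prime π := prime_of_norm_prime (by rw [hπn]; exact int_prime_of_nat p hp)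
  have hcπn : norm (conj π) = (p:ℤ) := by rw [norm_conj, hπn]
  have hcπpr : Prime (conj π) := prime_of_norm_prime (by rw [hcπn]; exact int_prime_of_nat p hp)
  have hp2 : (2:ℤ) ≤ p := by exact_mod_cast hp.two_le
  intro k
  induction k with
  | zero =>
    intro z h
    refine ⟨0, le_refl 0, ?_⟩
    simp only [pow_zero, Nat.zero_sub, mul_one]
    exact associated_one_iff_isUnit.mpr (isUnit_iff_norm_one.mpr (by simpa using h))
  | succ k ih =>
    intro z h
    have h0 : z ≠ 0 := ne_zero_of_norm (by rw [h]; positivity)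
    have hu : ¬IsUnit z := not_isUnit_of_norm (by
      rw [h, pow_succ]
      nlinarith [pow_pos (by linarith : (0:ℤ) < (p:ℤ)) k])
    obtain ⟨δ, hδ, hδz⟩ := exists_prime_dvd h0 hu
    have hnd : norm δ ∣ (p:ℤ) ^ (k+1) := by
      have := norm_dvd_norm hδz
      rwa [h] at this
    obtain ⟨j, hj1, hj2, hj3⟩ := prime_norm_pow hδ hp hnd
    have hdp : δ ∣ π * conj π := by
      apply hδ.dvd_of_dvd_pow (n := j)
      have hc : (((p:ℤ)^j : ℤ) : Eis) = ((p:ℕ) : Eis) ^ j := by push_cast; ring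
      have := dvd_intCast_norm δ
      rw [hj3, hc, hpp] at this
      exact this
    have hassoc : Associated δ π ∨ Associated δ (conj π) := by
      rcases hδ.dvd_or_dvd hdp with hd | hd
      · exact Or.inl (associated_of_dvd_irred hδ.not_unit hπpr.irreducible hd)
      · exact Or.inr (associated_of_dvd_irred hδ.not_unit hcπpr.irreducible hd)
    have hnδ : norm δ = (p:ℤ) := by
      rcases hassoc with hh | hh
      · rw [norm_of_associated hh, hπn]
      · rw [norm_of_associated hh, hcπn]
    obtain ⟨c, rfl⟩ := hδz
    have hnc : norm c = (p:ℤ) ^ k := by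
      rw [norm_mul, hnδ, pow_succ'] at h
      exact mul_left_cancel₀ (by linarith) h
    obtain ⟨i, hik, hci⟩ := ih c hnc
    rcases hassoc with hh | hh
    · refine ⟨i + 1, by omega, ?_⟩
      have h2 := hh.mul_mul hci
      have heq : π * (π ^ i * (conj π) ^ (k - i)) = π ^ (i+1) * (conj π) ^ (k + 1 - (i+1)) := by
        have : k + 1 - (i + 1) = k - i := by omega
        rw [this]
        ring
      rwa [heq] at h2
    · refine ⟨i, by omega, ?_⟩
      have h2 := hh.mul_mul hci
      have heq : conj π * (π ^ i * (conj π) ^ (k - i)) = π ^ i * (conj π) ^ (k + 1 - i) := by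
        have : k + 1 - i = (k - i) + 1 := by omega
        rw [this]
        ring
      rwa [heq] at h2

theorem case_one_helper (hp : p.Prime) (hπn : norm π = (p:ℤ))
    (hna : ¬ Associated π (conj π)) {i i' k : ℕ} (hii : i < i') (hi'k : i' ≤ k) :
    ¬ Associated (π ^ i * (conj π) ^ (k - i)) (π ^ i' * (conj π) ^ (k - i')) := by
  have hπpr : Prime π := prime_of_norm_prime (by rw [hπn]; exact int_prime_of_nat p hp)
  have hcπn : norm (conj π) = (p:ℤ) := by rw [norm_conj, hπn]
  have hcπpr : Prime (conj π) := prime_of_norm_prime (by rw [hcπn]; exact int_prime_of_nat p hp)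
  have hπ0 : π ≠ 0 := ne_zero_of_norm (by
    rw [hπn]
    have : (2:ℤ) ≤ p := by exact_mod_cast hp.two_le
    omega)
  rintro ⟨u, hu⟩
  have hkey : π ^ i * ((conj π) ^ (k - i) * u) =
      π ^ i * (π ^ (i' - i) * (conj π) ^ (k - i')) := by
    rw [← mul_assoc, hu, ← mul_assoc, ← pow_add]
    congr 2
    omega
  have hcancel := mul_left_cancel₀ (pow_ne_zero i hπ0) hkey
  have hdvd : π ∣ (conj π) ^ (k - i) * u := by
    rw [hcancel]
    exact Dvd.dvd.mul_right (dvd_pow_self π (by omega)) _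
  have hdvd2 : π ∣ (conj π) ^ (k - i) := (Units.dvd_mul_right).mp hdvd
  have hdvd3 : π ∣ conj π := hπpr.dvd_of_dvd_pow hdvd2
  exact hna (associated_of_dvd_irred hπpr.not_unit hcπpr.irreducible hdvd3)

theorem case_one_inj (hp : p.Prime) (hπn : norm π = (p:ℤ))
    (hna : ¬ Associated π (conj π)) {i i' k : ℕ} (hik : i ≤ k) (hi'k : i' ≤ k)
    (h : Associated (π ^ i * (conj π) ^ (k - i)) (π ^ i' * (conj π) ^ (k - i'))) :
    i = i' := by
  rcases lt_trichotomy i i' with hlt | heq | hgt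
  · exact absurd h (case_one_helper hp hπn hna hlt hi'k)
  · exact heq
  · exact absurd h.symm (case_one_helper hp hπn hna hgt hik)

theorem card_pow_one_mod_three (hp : p.Prime) (h1 : p % 3 = 1) (k : ℕ) :
    Nat.card {c : Associates Eis // normA c = (p:ℤ) ^ k} = k + 1 := by
  obtain ⟨π, hπn, hpp⟩ := exists_pi hp h1
  have hna := pi_not_assoc_conj hp h1 hπn
  have hcπn : norm (conj π) = (p:ℤ) := by rw [norm_conj, hπn]
  have e : {c : Associates Eis // normA c = (p:ℤ) ^ k} ≃ Fin (k+1) := by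
    refine (Equiv.ofBijective
      (fun i : Fin (k+1) => (⟨Associates.mk (π ^ i.val * (conj π) ^ (k - i.val)), by
        rw [normA_mk, norm_mul, norm_pow, norm_pow, hπn, hcπn, ← pow_add]
        congr 1
        omega⟩ : {c : Associates Eis // normA c = (p:ℤ) ^ k})) ⟨?_, ?_⟩).symm
    · intro i j hij
      simp only [Subtype.mk.injEq, Associates.mk_eq_mk_iff_associated] at hij
      exact Fin.ext (case_one_inj hp hπn hna (by omega) (by omega) hij)
    · rintro ⟨c, hc⟩
      obtain ⟨i, hik, hassoc⟩ := case_one_class hp hπn hpp k (Quot.out c) hc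
      refine ⟨⟨i, by omega⟩, Subtype.ext ?_⟩
      show Associates.mk _ = c
      conv_rhs => rw [← Associates.quot_out c]
      exact Associates.mk_eq_mk_iff_associated.mpr hassoc.symm
  exact Nat.card_eq_of_equiv_fin e

end CaseOneCount

end Eis


namespace Eis

/-- norm as monoid hom -/
def normHom : Eis →* ℤ := { toFun := norm, map_one' := norm_one, map_mul' := norm_mul }

theorem natAbs_norm_ge_two {π : Eis} (hπ : Prime π) : 2 ≤ (norm π).natAbs := by
  have h0 : norm π ≠ 0 := fun h => hπ.ne_zero (norm_eq_zero_iff.mp h)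
  have h1 : norm π ≠ 1 := fun h => hπ.not_unit (isUnit_iff_norm_one.mpr h)
  have := norm_nonneg π
  omega

theorem key_dvd : ∀ (N : ℕ) (a b a' b' : Eis), (norm a).natAbs = N → a * b = a' * b' →
    Nat.Coprime (norm a).natAbs (norm b').natAbs → a ∣ a' := by
  intro N
  induction N using Nat.strong_induction_on with
  | _ N ih =>
    intro a b a' b' hN heq hco
    by_cases ha0 : a = 0
    · subst ha0
      rw [zero_mul] at heq
      rcases mul_eq_zero.mp heq.symm with h | h
      · rw [h]
      · exfalso
        rw [h] at hco
        simp [norm, Nat.Coprime] at hco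
    · by_cases hau : IsUnit a
      · exact hau.dvd
      · obtain ⟨π, hπ, hπa⟩ := exists_prime_dvd ha0 hau
        have hπb' : ¬ π ∣ b' := by
          intro hd
          have h1 : (norm π).natAbs ∣ (norm a).natAbs :=
            Int.natAbs_dvd_natAbs.mpr (norm_dvd_norm hπa)
          have h2 : (norm π).natAbs ∣ (norm b').natAbs :=
            Int.natAbs_dvd_natAbs.mpr (norm_dvd_norm hd)
          have h3 : (norm π).natAbs = 1 := Nat.eq_one_of_dvd_coprimes hco h1 h2
          have := natAbs_norm_ge_two hπ
          omega
        have hπa' : π ∣ a' := by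
          have hd : π ∣ a' * b' := heq ▸ (hπa.mul_right b)
          exact (hπ.dvd_or_dvd hd).resolve_right hπb'
        obtain ⟨c, rfl⟩ := hπa
        obtain ⟨d, rfl⟩ := hπa'
        have heq2 : c * b = d * b' := by
          have : π * (c * b) = π * (d * b') := by
            rw [← mul_assoc, ← mul_assoc]; exact heq
          exact mul_left_cancel₀ hπ.ne_zero this
        have hc0 : c ≠ 0 := fun h => ha0 (by rw [h, mul_zero])
        have hlt : (norm c).natAbs < N := by
          rw [← hN, norm_mul, Int.natAbs_mul]
          have h2 := natAbs_norm_ge_two hπ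
          have hc : (norm c).natAbs ≠ 0 := by
            intro h
            have : norm c = 0 := by omega
            exact hc0 (norm_eq_zero_iff.mp this)
          have h3 : 0 < (norm c).natAbs := Nat.pos_of_ne_zero hc
          nlinarith
        have hcod : Nat.Coprime (norm c).natAbs (norm b').natAbs := by
          apply Nat.Coprime.coprime_dvd_left _ hco
          rw [norm_mul, Int.natAbs_mul]
          exact Dvd.intro_left _ rfl
        have := ih (norm c).natAbs hlt c b d b' rfl heq2 hcod
        exact mul_dvd_mul_left π this

theorem prime_norm_dvd_sq {π : Eis} (hπ : Prime π) {q : ℕ} (hq : q.Prime)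
    (hd : (q : ℤ) ∣ norm π) : norm π ∣ (q:ℤ)^2 := by
  set N := (norm π).natAbs with hNdef
  have hnn := norm_nonneg π
  have hN0 : N ≠ 0 := by
    have := natAbs_norm_ge_two hπ
    omega
  have hcastN : ((N : ℕ) : ℤ) = norm π := Int.natAbs_of_nonneg hnn
  -- π divides the cast of N, which is a product of primes
  have hdN : π ∣ ((N : ℕ) : Eis) := by
    have := dvd_intCast_norm π
    have hcc : (((norm π) : ℤ) : Eis) = ((N : ℕ) : Eis) := by
      rw [← hcastN]; push_cast; rfl
    rwa [hcc] at this
  have hprodN : ((N : ℕ) : Eis) = ((N.primeFactorsList).map (fun q : ℕ => ((q:ℕ) : Eis))).prod := by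
    conv_lhs => rw [← Nat.prod_primeFactorsList hN0]
    rw [Nat.cast_list_prod]
  obtain ⟨w, hwmem, hwdvd⟩ := hπ.exists_mem_multiset_dvd (s :=
      ((N.primeFactorsList).map (fun q : ℕ => ((q:ℕ) : Eis)) : List Eis))
    (by rw [Multiset.prod_coe, ← hprodN]; exact hdN)
  rw [Multiset.mem_coe, List.mem_map] at hwmem
  obtain ⟨q', hq'mem, rfl⟩ := hwmem
  have hq'prime : q'.Prime := Nat.prime_of_mem_primeFactorsList hq'mem
  have hnormdvd : norm π ∣ (q' : ℤ)^2 := by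
    have := norm_dvd_norm hwdvd
    have hc : ((q' : ℕ) : Eis) = (((q' : ℕ) : ℤ) : Eis) := by push_cast; rfl
    rwa [hc, norm_intCast] at this
  -- q ∣ norm π ∣ q'^2 so q = q'
  have hqq' : q = q' := by
    have h1 : (q:ℤ) ∣ (q':ℤ)^2 := dvd_trans hd hnormdvd
    have h2 : q ∣ q' ^ 2 := by exact_mod_cast h1
    have h3 : q ∣ q' := hq.dvd_of_dvd_pow h2
    exact ((Nat.prime_dvd_prime_iff_eq hq hq'prime).mp h3)
  rw [hqq']
  exact hnormdvd

theorem split_norm : ∀ (m : ℕ), ∀ (n : ℕ) (z : Eis), Nat.Coprime m n →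
    norm z = (m : ℤ) * (n : ℤ) → ∃ x y : Eis, z = x * y ∧ norm x = m ∧ norm y = n := by
  intro m
  induction m using Nat.strong_induction_on with
  | _ m ih =>
    intro n z hco hz
    rcases Nat.eq_zero_or_pos m with rfl | hm0
    · have hn1 : n = 1 := by simpa using hco
      subst hn1
      have hz0 : z = 0 := norm_eq_zero_iff.mp (by simpa using hz)
      exact ⟨0, 1, by rw [hz0, zero_mul], by simp [norm], norm_one⟩
    rcases eq_or_lt_of_le (Nat.succ_le_of_lt hm0) with hm1 | hm2
    · refine ⟨1, z, by rw [one_mul], by rw [norm_one, ← hm1]; simp, ?_⟩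
      rw [hz, ← hm1]
      simp
    · -- m ≥ 2
      set p := m.minFac with hp
      have hpprime : p.Prime := Nat.minFac_prime (by omega)
      have hpm : p ∣ m := Nat.minFac_dvd m
      have hn0 : n ≠ 0 := by
        intro h
        rw [h] at hco
        simp [Nat.coprime_zero_right] at hco
        omega
      have hz0 : z ≠ 0 := by
        apply ne_zero_of_norm
        rw [hz]
        have : (0:ℤ) < (m:ℤ) * n := by
          have : 0 < m * n := Nat.mul_pos hm0 (Nat.pos_of_ne_zero hn0)
          exact_mod_cast this
        omega
      -- find a prime π ∣ z with p ∣ norm π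
      have hexπ : ∃ π : Eis, Prime π ∧ π ∣ z ∧ (p:ℤ) ∣ norm π := by
        have hfactors := UniqueFactorizationMonoid.factors_prod hz0
        have hnormprod : norm z = ((UniqueFactorizationMonoid.factors z).map norm).prod := by
          rw [← norm_of_associated hfactors]
          exact (Multiset.prod_hom _ normHom).symm
        have hpdvd : (p:ℤ) ∣ norm z := by
          rw [hz]
          exact Dvd.dvd.mul_right (by exact_mod_cast Int.natCast_dvd_natCast.mpr hpm) _
        have hpint : Prime ((p:ℕ) : ℤ) := int_prime_of_nat p hpprime
        obtain ⟨w, hwmem, hwdvd⟩ := hpint.exists_mem_multiset_dvd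
          (by rw [← hnormprod]; exact hpdvd)
        rw [Multiset.mem_map] at hwmem
        obtain ⟨π, hπmem, rfl⟩ := hwmem
        exact ⟨π, UniqueFactorizationMonoid.prime_of_factor π hπmem,
          UniqueFactorizationMonoid.dvd_of_mem_factors hπmem, hwdvd⟩
      obtain ⟨π, hπ, hπz, hpnorm⟩ := hexπ
      have hnormsq : norm π ∣ (p:ℤ)^2 := prime_norm_dvd_sq hπ hpprime hpnorm
      have hnn := norm_nonneg π
      have hnat : (norm π).natAbs ∣ p^2 := by
        have := Int.natAbs_dvd_natAbs.mpr hnormsq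
        rwa [Int.natAbs_pow, Int.natAbs_natCast] at this
      obtain ⟨j, hj2, hjeq⟩ := (Nat.dvd_prime_pow hpprime).mp hnat
      have hj1 : 1 ≤ j := by
        rcases Nat.eq_zero_or_pos j with rfl | h
        · exfalso
          have := natAbs_norm_ge_two hπ
          simp at hjeq
          omega
        · exact h
      obtain ⟨c, rfl⟩ := hπz
      interval_cases j
      · -- norm π = p
        have hnπ : norm π = (p:ℤ) := by
          rw [← Int.natAbs_of_nonneg hnn, hjeq]
          push_cast; ring
        obtain ⟨m', hm'⟩ := hpm
        have hm'pos : 0 < m' := Nat.pos_of_ne_zero (by rintro rfl; omega)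
        have hm'lt : m' < m := by
          have hcalc : m' < 2 * m' := by omega
          have hcalc2 : 2 * m' ≤ p * m' := Nat.mul_le_mul_right m' hpprime.two_le
          omega
        have hnc : norm c = (m' : ℤ) * n := by
          rw [norm_mul, hnπ] at hz
          have hcast : (m:ℤ) = (p:ℤ) * m' := by exact_mod_cast congrArg (Nat.cast : ℕ → ℤ) hm'
          rw [hcast, mul_assoc] at hz
          exact mul_left_cancel₀ (by exact_mod_cast hpprime.pos.ne') hz
        have hcom' : Nat.Coprime m' n :=
          Nat.Coprime.coprime_dvd_left (Dvd.intro_left p hm'.symm) hco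
        obtain ⟨x1, y, hxy, hnx1, hny⟩ := ih m' hm'lt n c hcom' hnc
        refine ⟨π * x1, y, by rw [hxy, mul_assoc], ?_, hny⟩
        rw [norm_mul, hnπ, hnx1, hm']
        push_cast; ring
      · -- norm π = p^2
        have hnπ : norm π = (p:ℤ)^2 := by
          rw [← Int.natAbs_of_nonneg hnn, hjeq]
          push_cast; ring
        have hp2m : p^2 ∣ m := by
          have h1 : (p:ℤ)^2 ∣ (m:ℤ) * n := by
            rw [← hz, ← hnπ]
            exact norm_dvd_norm (Dvd.intro c rfl)
          have h2 : p^2 ∣ m * n := by exact_mod_cast h1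
          have hpn : ¬ p ∣ n := fun hd =>
            Nat.Prime.one_lt hpprime |>.ne' (Nat.eq_one_of_dvd_coprimes hco hpm hd)
          have hcop : Nat.Coprime (p^2) n :=
            Nat.Coprime.pow_left 2 (hpprime.coprime_iff_not_dvd.mpr hpn)
          exact hcop.dvd_of_dvd_mul_right h2
        obtain ⟨m'', hm''⟩ := hp2m
        have hm''pos : 0 < m'' := Nat.pos_of_ne_zero (by rintro rfl; omega)
        have hm''lt : m'' < m := by
          have hp2 : 2 ≤ p^2 := by nlinarith [hpprime.two_le]
          have hcalc : m'' < 2 * m'' := by omega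
          have hcalc2 : 2 * m'' ≤ p^2 * m'' := Nat.mul_le_mul_right m'' hp2
          omega
        have hnc : norm c = (m'' : ℤ) * n := by
          rw [norm_mul, hnπ] at hz
          have hcast : (m:ℤ) = (p:ℤ)^2 * m'' := by exact_mod_cast congrArg (Nat.cast : ℕ → ℤ) hm''
          rw [hcast, mul_assoc] at hz
          refine mul_left_cancel₀ ?_ hz
          have hppos : (0:ℤ) < (p:ℤ) := by exact_mod_cast hpprime.pos
          nlinarith
        have hcom'' : Nat.Coprime m'' n :=
          Nat.Coprime.coprime_dvd_left (Dvd.intro_left _ hm''.symm) hco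
        obtain ⟨x1, y, hxy, hnx1, hny⟩ := ih m'' hm''lt n c hcom'' hnc
        refine ⟨π * x1, y, by rw [hxy, mul_assoc], ?_, hny⟩
        rw [norm_mul, hnπ, hnx1, hm'']
        push_cast; ring

end Eis


namespace Eis

theorem card_mul_coprime (m n : ℕ) (hm : 0 < m) (hn : 0 < n) (hco : m.Coprime n) :
    Nat.card {c : Associates Eis // normA c = (m:ℤ) * (n:ℤ)} =
      Nat.card {c : Associates Eis // normA c = (m:ℤ)} *
        Nat.card {c : Associates Eis // normA c = (n:ℤ)} := by
  have e : ({c : Associates Eis // normA c = (m:ℤ)} × {c : Associates Eis // normA c = (n:ℤ)}) ≃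
      {c : Associates Eis // normA c = (m:ℤ) * (n:ℤ)} := by
    refine Equiv.ofBijective (fun p => ⟨p.1.val * p.2.val, by
      rw [normA_mul, p.1.2, p.2.2]⟩) ⟨?_, ?_⟩
    · rintro ⟨⟨A1, hA⟩, ⟨B1, hB⟩⟩ ⟨⟨A1', hA'⟩, ⟨B1', hB'⟩⟩ h
      simp only [Subtype.mk.injEq] at h
      set A := Quot.out A1 with hAdef
      set B := Quot.out B1 with hBdef
      set A' := Quot.out A1' with hA'def
      set B' := Quot.out B1' with hB'def
      have hassoc : Associated (A * B) (A' * B') := by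
        rw [← Associates.mk_eq_mk_iff_associated, ← Associates.mk_mul_mk, ← Associates.mk_mul_mk,
          hAdef, hBdef, hA'def, hB'def,
          Associates.quot_out, Associates.quot_out, Associates.quot_out, Associates.quot_out]
        exact h
      obtain ⟨u, hu⟩ := hassoc
      have hnA : norm A = (m:ℤ) := hA
      have hnB : norm B = (n:ℤ) := hB
      have hnA' : norm A' = (m:ℤ) := hA'
      have hnB' : norm B' = (n:ℤ) := hB'
      have hcoAB : Nat.Coprime (norm A).natAbs (norm B').natAbs := by
        rw [hnA, hnB', Int.natAbs_natCast, Int.natAbs_natCast]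
        exact hco
      have key1 : A ∣ A' := by
        apply key_dvd (norm A).natAbs A (B * u.val) A' B' rfl ?_ hcoAB
        rw [← mul_assoc]
        exact hu
      have key2 : A' ∣ A := by
        apply key_dvd (norm A').natAbs A' B' A (B * u.val) rfl ?_ ?_
        · rw [← mul_assoc]
          exact hu.symm
        · rw [hnA', norm_mul, norm_unit, mul_one, hnB, Int.natAbs_natCast, Int.natAbs_natCast]
          exact hco
      have hAA : A1 = A1' := by
        rw [← Associates.quot_out A1, ← Associates.quot_out A1',
          Associates.mk_eq_mk_iff_associated]
        exact associated_of_dvd_dvd key1 key2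
      subst hAA
      have hA10 : A1 ≠ 0 := by
        rw [← Associates.quot_out A1]
        rw [Associates.mk_ne_zero]
        apply ne_zero_of_norm
        rw [hnA]
        exact_mod_cast hm.ne'
      have hBB : B1 = B1' := mul_left_cancel₀ hA10 h
      subst hBB
      rfl
    · rintro ⟨c, hc⟩
      obtain ⟨x, y, hxy, hnx, hny⟩ := split_norm m n (Quot.out c) hco hc
      refine ⟨(⟨Associates.mk x, by rw [normA_mk, hnx]⟩, ⟨Associates.mk y, by rw [normA_mk, hny]⟩),
        Subtype.ext ?_⟩
      show Associates.mk x * Associates.mk y = c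
      rw [Associates.mk_mul_mk, ← hxy, Associates.quot_out]
  rw [← Nat.card_congr e, Nat.card_prod]

end Eis


/-- the nontrivial character mod 3. -/
def chiM3 (d : ℕ) : ℤ :=
  if d % 3 = 1 then 1 else if d % 3 = 2 then -1 else 0

namespace EisFinal

open Eis

theorem chiM3_mul (m n : ℕ) : chiM3 (m * n) = chiM3 m * chiM3 n := by
  rcases (show m % 3 = 0 ∨ m % 3 = 1 ∨ m % 3 = 2 by omega) with h|h|h <;>
    rcases (show n % 3 = 0 ∨ n % 3 = 1 ∨ n % 3 = 2 by omega) with h'|h'|h' <;>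
      simp [chiM3, Nat.mul_mod, h, h']

theorem chiM3_pow (p i : ℕ) : chiM3 (p ^ i) = chiM3 p ^ i := by
  induction i with
  | zero => simp [chiM3]
  | succ i ih => rw [pow_succ, chiM3_mul, ih, pow_succ]

theorem chiM3_one : chiM3 1 = 1 := rfl

/-- the divisor sum of chi -/
noncomputable def D (n : ℕ) : ℤ := n.divisors.sum fun d => chiM3 d

theorem D_one : D 1 = 1 := by simp [D, chiM3]

theorem D_mul (m n : ℕ) (hco : m.Coprime n) : D (m * n) = D m * D n := by
  classical
  let χ : ArithmeticFunction ℤ := ⟨fun d => chiM3 d, by simp [chiM3]⟩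
  have hmult : χ.IsMultiplicative :=
    ⟨by simp [χ, chiM3], fun {a b} _ => chiM3_mul a b⟩
  have hzmult := (ArithmeticFunction.isMultiplicative_zeta.natCast).mul hmult
  have happly : ∀ k : ℕ, ((↑ArithmeticFunction.zeta * χ : ArithmeticFunction ℤ)) k = D k := by
    intro k
    rw [ArithmeticFunction.coe_zeta_mul_apply]
    rfl
  rw [← happly, ← happly, ← happly, hzmult.map_mul_of_coprime hco]

theorem alt_sum (k : ℕ) : (Finset.range (k+1)).sum (fun i => (-1:ℤ)^i) =
    if Even k then 1 else 0 := by
  induction k with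
  | zero => simp
  | succ k ih =>
    rw [Finset.sum_range_succ, ih]
    rcases Nat.even_or_odd k with he | ho
    · rw [if_pos he, if_neg (by simp [Nat.even_add_one, he])]
      rw [(Nat.odd_add_one.mpr (Nat.not_odd_iff_even.mpr he) : Odd (k+1)).neg_one_pow]
      ring
    · rw [if_neg (Nat.not_even_iff_odd.mpr ho), if_pos (Nat.even_add_one.mpr (Nat.not_even_iff_odd.mpr ho))]
      rw [(Nat.even_add_one.mpr (Nat.not_even_iff_odd.mpr ho)).neg_one_pow]
      ring

theorem zero_pow_sum (k : ℕ) : (Finset.range (k+1)).sum (fun i => (0:ℤ)^i) = 1 := by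
  induction k with
  | zero => simp
  | succ k ih => rw [Finset.sum_range_succ, ih, zero_pow (by omega), add_zero]

theorem D_prime_pow {p : ℕ} (hp : p.Prime) (k : ℕ) :
    D (p ^ k) = (Finset.range (k+1)).sum (fun i => chiM3 p ^ i) := by
  rw [D, Nat.sum_divisors_prime_pow hp]
  exact Finset.sum_congr rfl (fun i _ => chiM3_pow p i)

end EisFinal


namespace EisFinal

theorem card_congr_eq {a b : ℤ} (h : a = b) :
    Nat.card {c : Associates Eis // Eis.normA c = a} =
      Nat.card {c : Associates Eis // Eis.normA c = b} := by rw [h]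

theorem Hval : ∀ n : ℕ, 0 < n →
    (Nat.card {c : Associates Eis // Eis.normA c = (n:ℤ)} : ℤ) = D n := by
  refine Nat.recOnPosPrimePosCoprime ?_ ?_ ?_ ?_
  · -- prime powers
    intro p k hp' hk _
    have hp : p.Prime := hp'
    have hcast : ((p ^ k : ℕ) : ℤ) = ((p:ℕ) : ℤ)^k := by push_cast; ring
    rw [card_congr_eq hcast, D_prime_pow hp k]
    rcases (show p % 3 = 0 ∨ p % 3 = 1 ∨ p % 3 = 2 by omega) with h|h|h
    · have hp3 : p = 3 :=
        ((Nat.prime_dvd_prime_iff_eq (by norm_num) hp).mp (Nat.dvd_of_mod_eq_zero h)).symm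
      subst hp3
      rw [card_congr_eq (show ((3:ℕ):ℤ)^k = (3:ℤ)^k by norm_num), Eis.card_pow_three k]
      have hchi : chiM3 3 = 0 := by simp [chiM3]
      rw [hchi, zero_pow_sum]
      simp
    · rw [Eis.card_pow_one_mod_three hp h k]
      have hchi : chiM3 p = 1 := by simp [chiM3, h]
      rw [hchi]
      simp
    · have hchi : chiM3 p = -1 := by simp [chiM3, h]
      rw [hchi, alt_sum]
      rcases Nat.even_or_odd k with he | ho
      · obtain ⟨t, ht⟩ := he
        rw [Eis.card_pow_two_mod_three_even hp h k t (by omega)]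
        rw [if_pos ⟨t, ht⟩]
        simp
      · rw [Eis.card_pow_two_mod_three_odd hp h k (by
          rintro ⟨t, ht⟩
          exact (Nat.not_odd_iff_even.mpr ⟨t, by omega⟩) ho)]
        rw [if_neg (Nat.not_even_iff_odd.mpr ho)]
        simp
  · intro h; omega
  · intro _
    have hone : ((1:ℕ) : ℤ) = (3:ℤ)^0 := by norm_num
    rw [card_congr_eq hone, Eis.card_pow_three 0, D_one]
    simp
  · intro a b ha hb hco iha ihb _
    have hcast : ((a * b : ℕ) : ℤ) = (a:ℤ) * (b:ℤ) := by push_cast; ring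
    rw [card_congr_eq hcast, Eis.card_mul_coprime a b (by omega) (by omega) hco,
      D_mul a b hco]
    push_cast
    rw [iha (by omega), ihb (by omega)]

theorem main (n : ℕ) (hn : 0 < n) :
    (Nat.card {p : ℤ × ℤ // p.1 ^ 2 + p.1 * p.2 + p.2 ^ 2 = (n : ℤ)} : ℤ) =
      6 * n.divisors.sum fun d => chiM3 d := by
  have e : {p : ℤ × ℤ // p.1 ^ 2 + p.1 * p.2 + p.2 ^ 2 = (n : ℤ)} ≃
      {z : Eis // Eis.norm z = (n:ℤ)} :=
    { toFun := fun q => ⟨⟨q.val.1, -q.val.2⟩, by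
        have h := q.2
        rw [Eis.norm_def]
        simp only
        linear_combination h⟩
      invFun := fun z => ⟨(z.val.re, -z.val.im), by
        have h := z.2
        rw [Eis.norm_def] at h
        simp only
        linear_combination h⟩
      left_inv := fun q => by
        apply Subtype.ext
        simp
      right_inv := fun z => by
        apply Subtype.ext
        apply Eis.ext <;> simp }
  have hn0 : (n:ℤ) ≠ 0 := by exact_mod_cast hn.ne'
  rw [Nat.card_congr e, Eis.card_norm_eq (n:ℤ) hn0]
  push_cast
  rw [Hval n hn]
  rfl

end EisFinal


theorem rep_hexagonal (n : ℕ) (hn : 0 < n) :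
    (Nat.card {p : ℤ × ℤ // p.1 ^ 2 + p.1 * p.2 + p.2 ^ 2 = (n : ℤ)} : ℤ) =
      6 * n.divisors.sum fun d => chiM3 d := EisFinal.main n hn
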